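/- arXiv:1206.2457 — 3 statements merged into one kernel-verified Lean document; each statement's English description precedes it below -/
import Mathlib

section
/- Define f(X, μ) = 3(μ−1)X + 1/X for X > 0 and μ > 1, subject to the constraint |μ−1|√(μ+2) · X ≥ √2. Then f(X, μ) ≥ √6. -/
/-!
Write `f(X) = 3(μ-1)X + 1/X`. If `μ ≥ 3/2`, AM–GM gives `f(X) ≥ 2√(3(μ-1)) ≥ √6`. If `μ < 3/2`,
the constraint reads `X ≥ X₀ := √2 / ((μ-1)√(μ+2))`, and `X₀` lies to the right of the minimiser
`1/√(3(μ-1))` of `f`, so `f(X) ≥ f(X₀)`, and on the boundary `f(X₀) ≥ √(2(μ+2)) ≥ √6`.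
-/

open Real

theorem le_mul_add_one_div_of_sq_le {c s X : ℝ} (hX : 0 < X) (hs : s ^ 2 ≤ 4 * c) :
    s ≤ c * X + 1 / X :=
  calc s ≤ s ^ 2 / 4 * X + 1 / X := by
        have hsq : s ^ 2 / 4 * X + 1 / X - s = (s * X / 2 - 1) ^ 2 / X := by
          field_simp
          ring
        have : 0 ≤ (s * X / 2 - 1) ^ 2 / X := by positivity
        linarith
    _ ≤ c * X + 1 / X := by gcongr; linarith

theorem mul_add_one_div_le_of_le {c X₀ X : ℝ} (hX₀ : 0 < X₀) (hle : X₀ ≤ X)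
    (hc : 1 ≤ c * X₀ ^ 2) : c * X₀ + 1 / X₀ ≤ c * X + 1 / X := by
  have hX : 0 < X := hX₀.trans_le hle
  have hc₀ : 0 < c := by nlinarith [sq_nonneg X₀]
  have hdiff : c * X + 1 / X - (c * X₀ + 1 / X₀) = (X - X₀) * (c * X * X₀ - 1) / (X * X₀) := by
    field_simp
    ring
  have : 0 ≤ (X - X₀) * (c * X * X₀ - 1) / (X * X₀) := by
    apply div_nonneg _ (by positivity)
    apply mul_nonneg (by linarith)
    nlinarith [mul_le_mul_of_nonneg_left hle (mul_nonneg hc₀.le hX₀.le)]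
  linarith

theorem sqrt_six_le_of_constraint_eq {μ X₀ : ℝ} (hμ : 1 < μ) (hX₀ : 0 < X₀)
    (hbd : (μ - 1) * √(μ + 2) * X₀ = √2) : √6 ≤ 3 * (μ - 1) * X₀ + 1 / X₀ := by
  have hs : √(μ + 2) ^ 2 = μ + 2 := sq_sqrt (by linarith)
  have hr : √2 ^ 2 = 2 := sq_sqrt (by norm_num)
  have hquad : √2 * √(μ + 2) * X₀ ≤ 3 * (μ - 1) * X₀ ^ 2 + 1 := by
    have hkey : (μ - 1) * (μ + 2) * (3 * (μ - 1) * X₀ ^ 2 + 1 - √2 * √(μ + 2) * X₀)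
        = (μ - 1) * μ := by
      linear_combination (3 * ((μ - 1) * √(μ + 2) * X₀) + 3 * √2 - (μ + 2) * √2) * hbd
        - 3 * (μ - 1) ^ 2 * X₀ ^ 2 * hs + (1 - μ) * hr
    have : 0 < (μ - 1) * (μ + 2) := by nlinarith
    nlinarith
  have h6 : √6 ≤ √2 * √(μ + 2) := by
    rw [← sqrt_mul (by norm_num)]
    exact sqrt_le_sqrt (by linarith)
  rw [show 3 * (μ - 1) * X₀ + 1 / X₀ = (3 * (μ - 1) * X₀ ^ 2 + 1) / X₀ by field_simp,
    le_div_iff₀ hX₀]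
  nlinarith [mul_le_mul_of_nonneg_right h6 hX₀.le]

/-- If `X > 0`, `μ > 1` and `(μ−1)√(μ+2)·X ≥ √2`, then
`3(μ−1)X + 1/X ≥ √6`. -/
theorem stmt4 (X μ : ℝ) (hX : 0 < X) (hμ : 1 < μ)
    (hcon : Real.sqrt 2 ≤ (μ - 1) * Real.sqrt (μ + 2) * X) :
    Real.sqrt 6 ≤ 3 * (μ - 1) * X + 1 / X := by
  rcases le_or_gt (1 / 2) (μ - 1) with hlarge | hsmall
  · exact le_mul_add_one_div_of_sq_le hX (by rw [sq_sqrt (by norm_num)]; linarith)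
  · have hm : 0 < (μ - 1) * √(μ + 2) := mul_pos (by linarith) (sqrt_pos.2 (by linarith))
    set X₀ := √2 / ((μ - 1) * √(μ + 2))
    have hX₀ : 0 < X₀ := by positivity
    have hbd : (μ - 1) * √(μ + 2) * X₀ = √2 := mul_div_cancel₀ _ hm.ne'
    have hle : X₀ ≤ X := by rwa [div_le_iff₀ hm, mul_comm]
    have hmin : 1 ≤ 3 * (μ - 1) * X₀ ^ 2 := by
      have hsq : (μ - 1) ^ 2 * (μ + 2) * X₀ ^ 2 = 2 := by
        linear_combination ((μ - 1) * √(μ + 2) * X₀ + √2) * hbd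
          - (μ - 1) ^ 2 * X₀ ^ 2 * sq_sqrt (by linarith : (0 : ℝ) ≤ μ + 2)
          + sq_sqrt (by norm_num : (0 : ℝ) ≤ 2)
      nlinarith
    calc √6 ≤ 3 * (μ - 1) * X₀ + 1 / X₀ := sqrt_six_le_of_constraint_eq hμ hX₀ hbd
      _ ≤ 3 * (μ - 1) * X + 1 / X := mul_add_one_div_le_of_le hX₀ hle hmin
end

section
/- Define f(X, μ) = 3(μ−1)X + 1/X for X > 0 and 0 < μ < 1, subject to the constraint (1−μ)√(μ+2) · X ≥ √2. Then f(X, μ) ≤ −2. -/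
/-! Put `u = √((μ + 2) / 2)`, so that `1 - μ = 3 - 2u²` and the constraint reads
`X ≥ X₀ := 1 / ((3 - 2u²) u)`. The map `X ↦ 3(1 - μ)X - 1/X` is increasing, and its value at `X₀`
is `3/u + (2u² - 3)u = 2 + (u - 1)²(2u² + 4u + 3)/u ≥ 2`. -/

theorem two_le_three_div_add_mul {u : ℝ} (hu : 0 < u) : 2 ≤ 3 / u + (2 * u ^ 2 - 3) * u := by
  rw [← sub_nonneg]
  have hfactor : 3 / u + (2 * u ^ 2 - 3) * u - 2 = (u - 1) ^ 2 * (2 * u ^ 2 + 4 * u + 3) / u := by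
    field_simp
    ring
  rw [hfactor]
  positivity

theorem mul_sub_one_div_le_mul_sub_one_div {c x y : ℝ} (hc : 0 ≤ c) (hx : 0 < x) (hxy : x ≤ y) :
    c * x - 1 / x ≤ c * y - 1 / y :=
  sub_le_sub (by gcongr) (by gcongr)

theorem two_le_three_mul_sub_one_div {u X : ℝ} (hu : 0 < u) (hX : 0 < X)
    (h : 1 ≤ (3 - 2 * u ^ 2) * u * X) : 2 ≤ 3 * (3 - 2 * u ^ 2) * X - 1 / X := by
  set a := 3 - 2 * u ^ 2
  have ha : 0 < a := by
    have haX : 0 < a * (u * X) := by rw [← mul_assoc]; linarith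
    exact pos_of_mul_pos_left haX (by positivity)
  have hX₀ : 1 / (a * u) ≤ X := by
    rw [div_le_iff₀ (by positivity)]
    linarith
  calc 2 ≤ 3 / u + (2 * u ^ 2 - 3) * u := two_le_three_div_add_mul hu
    _ = 3 * a * (1 / (a * u)) - 1 / (1 / (a * u)) := by
      field_simp
      ring
    _ ≤ 3 * a * X - 1 / X :=
      mul_sub_one_div_le_mul_sub_one_div (by positivity) (by positivity) hX₀

theorem stmt5_general (X μ : ℝ) (hX : 0 < X) (hμ0 : 0 < μ)
    (hcon : Real.sqrt 2 ≤ (1 - μ) * Real.sqrt (μ + 2) * X) :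
    3 * (μ - 1) * X + 1 / X ≤ -2 := by
  set u := Real.sqrt ((μ + 2) / 2)
  have hu : 0 < u := Real.sqrt_pos.2 (by linarith)
  have hu2 : u ^ 2 = (μ + 2) / 2 := Real.sq_sqrt (by linarith)
  have hsqrt : Real.sqrt (μ + 2) = Real.sqrt 2 * u := by
    rw [← Real.sqrt_mul zero_le_two]
    ring_nf
  have h : 1 ≤ (3 - 2 * u ^ 2) * u * X := by
    rw [hsqrt] at hcon
    refine le_of_mul_le_mul_left ?_ (Real.sqrt_pos.2 zero_lt_two)
    rw [hu2]
    linarith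
  have hbound := two_le_three_mul_sub_one_div hu hX h
  rw [hu2] at hbound
  linarith

/-- If `X > 0`, `0 < μ < 1` and `(1−μ)√(μ+2)·X ≥ √2`, then
`3(μ−1)X + 1/X ≤ −2`. -/
theorem stmt5 (X μ : ℝ) (hX : 0 < X) (hμ0 : 0 < μ) (hμ1 : μ < 1)
    (hcon : Real.sqrt 2 ≤ (1 - μ) * Real.sqrt (μ + 2) * X) :
    3 * (μ - 1) * X + 1 / X ≤ -2 :=
  stmt5_general X μ hX hμ0 hcon
end

section
/- Let α > 0 and let ξ, η ∈ ℝ³ satisfy |ξ−η| ≥ 32|η| and |ξ−η| ≥ 32 max(α, 1). Then the resonance function ω_±(ξ,η) = −|ξ|² ± α|ξ−η| + |η|² satisfies |−|ξ|² ± α|ξ−η| + |η|²| ≥ (1/4)|ξ−η|(1+|ξ|). -/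
noncomputable section

abbrev E3 := EuclideanSpace ℝ (Fin 3)

/-- Non-resonance in the high-low regime: if `|ξ−η| ≥ 32|η|` and
`|ξ−η| ≥ 32 max(α,1)`, then the resonance function
`ω_±(ξ,η) = −|ξ|² ± α|ξ−η| + |η|²` satisfies
`|ω_±(ξ,η)| ≥ (1/4)|ξ−η|(1+|ξ|)`. -/
theorem stmt17 (α : ℝ) (hα : 0 < α) (ξ η : E3)
    (h1 : 32 * ‖η‖ ≤ ‖ξ - η‖) (h2 : 32 * max α 1 ≤ ‖ξ - η‖) :
    ∀ s : ℝ, (s = 1 ∨ s = -1) →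
      (1/4) * ‖ξ - η‖ * (1 + ‖ξ‖)
        ≤ |(-‖ξ‖^2 + s * α * ‖ξ - η‖ + ‖η‖^2)| := by
  intro s hs
  have hd1 : (32:ℝ) ≤ ‖ξ - η‖ := by
    have := le_max_right α 1; nlinarith
  have hαd : 32 * α ≤ ‖ξ - η‖ := by
    have := le_max_left α 1; nlinarith
  have ha : ‖ξ‖ ≤ ‖ξ - η‖ + ‖η‖ := by
    have := norm_add_le (ξ - η) η; simpa using this
  have hd : ‖ξ - η‖ ≤ ‖ξ‖ + ‖η‖ := norm_sub_le ξ η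
  have hb0 := norm_nonneg η
  have ha0 := norm_nonneg ξ
  rw [le_abs]
  right
  rcases hs with h | h <;> subst h <;>
    nlinarith [mul_nonneg hb0 hb0, mul_le_mul_of_nonneg_left h1 hb0,
      mul_le_mul_of_nonneg_left hαd ha0, mul_le_mul_of_nonneg_left h1 ha0,
      mul_le_mul_of_nonneg_left hd1 (norm_nonneg (ξ - η))]
end
end
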